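/- For x, y ∈ ℝ² (or ℝⁿ) with 0 < |x| < |y| and cos θ = ⟨x,y⟩/(|x||y|), one has 4 log|x-y|^{-1} = 4 log|y|^{-1} - |x|²/|y|² - 2Σ_{k=1}^∞ (|x|/|y|)^k [(|x|²/|y|²)/(k+2) - 1/k] C_k^{(1)}(cos θ). -/

import Mathlib

noncomputable def gegenbauer (v : ℝ) (k : ℕ) (z : ℝ) : ℝ :=
  ∑ l ∈ Finset.range (k / 2 + 1),
    (-1 : ℝ) ^ l * Real.Gamma ((k : ℝ) - (l : ℝ) + v) /
      (Real.Gamma v * (Nat.factorial l) * (Nat.factorial (k - 2 * l))) * (2 * z) ^ (k - 2 * l)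

/-! Put `r = ‖x‖ / ‖y‖` and let `θ` be the angle between `x` and `y`, so that
`‖x - y‖² = ‖y‖² (1 - 2 r cos θ + r²)`. Taking real parts in
`-log (1 - r e^{iθ}) = ∑ rⁿ e^{inθ} / n` gives
`-½ log (1 - 2 r cos θ + r²) = ∑_{n ≥ 1} rⁿ Tₙ(cos θ) / n`. Since `C_k^{(1)} = U_k` and
`2 Tₙ = Uₙ - Uₙ₋₂`, this series splits into two `U`-series, each convergent because
`|U_k| ≤ k + 1` on `[-1, 1]`; shifting the index of the second one by two yields the
expansion. -/

open Finset Polynomial.Chebyshev Real InnerProductGeometry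

section ExplicitFormula

variable {R : Type*} [CommRing R]

theorem neg_one_pow_mul_choose_mul_pow_add_two (k l : ℕ) (hl : l ≤ k) (x : R) :
    (-1 : R) ^ (l + 1) * ((k + 2 - (l + 1)).choose (l + 1) : R) * x ^ (k + 2 - 2 * (l + 1)) =
      x * ((-1 : R) ^ (l + 1) * ((k + 1 - (l + 1)).choose (l + 1) : R) *
        x ^ (k + 1 - 2 * (l + 1))) - (-1 : R) ^ l * ((k - l).choose l : R) * x ^ (k - 2 * l) := by
  rw [show k + 2 - (l + 1) = k - l + 1 by omega, show k + 1 - (l + 1) = k - l by omega,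
    show k + 2 - 2 * (l + 1) = k - 2 * l by omega, Nat.choose_succ_succ', Nat.cast_add]
  rcases Nat.lt_or_ge (k - l) (l + 1) with h | h
  · rw [Nat.choose_eq_zero_of_lt h]
    ring
  · rw [show k - 2 * l = k + 1 - 2 * (l + 1) + 1 by omega]
    ring

theorem eval_S_eq_sum_choose (k : ℕ) (x : R) :
    (S R k).eval x =
      ∑ l ∈ range (k + 1), (-1 : R) ^ l * ((k - l).choose l : R) * x ^ (k - 2 * l) := by
  induction k using Nat.twoStepInduction with
  | zero => simp
  | one => simp [sum_range_succ]
  | more k ih ih' =>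
    have h₂ : ∑ l ∈ range (k + 3),
          (-1 : R) ^ l * ((k + 2 - l).choose l : R) * x ^ (k + 2 - 2 * l) =
        x ^ (k + 2) + ∑ l ∈ range (k + 1),
          (-1 : R) ^ (l + 1) * ((k + 2 - (l + 1)).choose (l + 1) : R) *
            x ^ (k + 2 - 2 * (l + 1)) := by
      rw [sum_range_succ', sum_range_succ,
        Nat.choose_eq_zero_of_lt (by omega : k + 2 - (k + 2) < k + 2)]
      simp [add_comm]
    have h₁ : ∑ l ∈ range (k + 2),
          (-1 : R) ^ l * ((k + 1 - l).choose l : R) * x ^ (k + 1 - 2 * l) =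
        x ^ (k + 1) + ∑ l ∈ range (k + 1),
          (-1 : R) ^ (l + 1) * ((k + 1 - (l + 1)).choose (l + 1) : R) *
            x ^ (k + 1 - 2 * (l + 1)) := by
      rw [sum_range_succ']
      simp [add_comm]
    push_cast at ih' ⊢
    rw [S_add_two, Polynomial.eval_sub, Polynomial.eval_mul, Polynomial.eval_X, ih, ih', h₁, h₂,
      sum_congr rfl fun l hl =>
        neg_one_pow_mul_choose_mul_pow_add_two k l (Nat.le_of_lt_succ (mem_range.1 hl)) x,
      sum_sub_distrib, mul_add, mul_sum]
    ring

end ExplicitFormula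

theorem gegenbauer_one_eq_eval_U (k : ℕ) (z : ℝ) : gegenbauer 1 k z = (U ℝ k).eval z := by
  rw [← S_comp_two_mul_X, Polynomial.eval_comp, eval_S_eq_sum_choose, gegenbauer,
    ← sum_subset (range_subset_range.2 (by omega : k / 2 + 1 ≤ k + 1))]
  · refine sum_congr rfl fun l hl => ?_
    have hl : 2 * l ≤ k := by simp at hl; omega
    simp only [Polynomial.eval_mul, Polynomial.eval_ofNat, Polynomial.eval_X, Real.Gamma_one,
      one_mul]
    rw [show (k : ℝ) - l + 1 = (k - l : ℕ) + 1 by push_cast [show l ≤ k by omega]; ring,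
      Real.Gamma_nat_eq_factorial, Nat.cast_choose ℝ (by omega : l ≤ k - l),
      show k - l - l = k - 2 * l by omega]
    ring
  · intro l hl hl'
    rw [Nat.choose_eq_zero_of_lt (by simp at hl hl'; omega)]
    simp

theorem abs_eval_U_real_le {x : ℝ} (hx : |x| ≤ 1) (n : ℕ) : |(U ℝ n).eval x| ≤ n + 1 := by
  induction n using Nat.twoStepInduction with
  | zero => simp
  | one => simpa [abs_mul, one_add_one_eq_two] using mul_le_mul_of_nonneg_left hx zero_le_two
  | more n ih _ =>
    have hT := abs_eval_T_real_le_one (n + 2) hx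
    push_cast
    rw [U_eq_two_mul_T_add_U, Polynomial.eval_add, Polynomial.eval_mul, Polynomial.eval_ofNat]
    calc |2 * (T ℝ (n + 2)).eval x + (U ℝ n).eval x|
        ≤ 2 * |(T ℝ (n + 2)).eval x| + |(U ℝ n).eval x| := by
          simpa [abs_mul] using abs_add_le (2 * (T ℝ (n + 2)).eval x) ((U ℝ n).eval x)
      _ ≤ n + 2 + 1 := by linarith

theorem summable_pow_mul_eval_U_div {r x : ℝ} (hr : |r| < 1) (hx : |x| ≤ 1) :
    Summable (fun n : ℕ => r ^ (n + 1) * (U ℝ (n + 1)).eval x / (n + 1)) := by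
  refine .of_norm_bounded ((summable_geometric_of_lt_one (abs_nonneg r) hr).mul_left (2 * |r|))
    fun n => ?_
  have hU := abs_eval_U_real_le hx (n + 1)
  push_cast at hU
  rw [norm_div, norm_mul, norm_pow, Real.norm_eq_abs, Real.norm_eq_abs, Real.norm_eq_abs,
    abs_of_pos (by positivity : (0 : ℝ) < n + 1), div_le_iff₀ (by positivity)]
  calc |r| ^ (n + 1) * |(U ℝ (n + 1)).eval x| ≤ |r| ^ (n + 1) * (n + 1 + 1) := by gcongr
    _ ≤ |r| ^ (n + 1) * (2 * (n + 1)) := by gcongr; linarith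
    _ = 2 * |r| * |r| ^ n * (n + 1) := by ring

theorem hasSum_pow_mul_cos_div {r : ℝ} (hr : |r| < 1) (θ : ℝ) :
    HasSum (fun n : ℕ => r ^ (n + 1) * cos ((n + 1) * θ) / (n + 1))
      (-log (1 - 2 * r * cos θ + r ^ 2) / 2) := by
  set w : ℂ := r * Complex.exp (θ * Complex.I)
  have hw : ‖w‖ < 1 := by simpa [w, Complex.norm_exp_ofReal_mul_I] using hr
  have hnorm : ‖1 - w‖ ^ 2 = 1 - 2 * r * cos θ + r ^ 2 := by
    rw [Complex.sq_norm, Complex.normSq_apply]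
    simp only [w, Complex.sub_re, Complex.sub_im, Complex.one_re, Complex.one_im,
      Complex.re_ofReal_mul, Complex.im_ofReal_mul, Complex.exp_ofReal_mul_I_re,
      Complex.exp_ofReal_mul_I_im]
    linear_combination r ^ 2 * sin_sq_add_cos_sq θ
  convert Complex.hasSum_re (Complex.hasSum_taylorSeries_neg_log' hw) using 1
  · ext n
    rw [show w ^ (n + 1) / (n + 1) = ((r ^ (n + 1) / (n + 1) : ℝ) : ℂ) *
        Complex.exp (((n + 1) * θ : ℝ) * Complex.I) by
      push_cast; rw [mul_pow, ← Complex.exp_nat_mul]; push_cast; ring_nf,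
      Complex.re_ofReal_mul, Complex.exp_ofReal_mul_I_re]
    ring
  · rw [Complex.neg_re, Complex.log_re, ← hnorm, Real.log_pow]
    push_cast
    ring

theorem hasSum_pow_mul_eval_U_cos {r : ℝ} (hr : |r| < 1) (θ : ℝ) :
    HasSum (fun k : ℕ =>
        r ^ (k + 1) * (r ^ 2 / (k + 3) - 1 / (k + 1)) * (U ℝ (k + 1)).eval (cos θ))
      (log (1 - 2 * r * cos θ + r ^ 2) - r ^ 2 / 2) := by
  set Q := 1 - 2 * r * cos θ + r ^ 2
  -- integer index: at `n = 0` the term vanishes because `U ℝ (-1) = 0`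
  set f : ℕ → ℝ := fun n => r ^ (n + 1) * (U ℝ (n - 1)).eval (cos θ) / (n + 1)
  obtain ⟨B, hB⟩ := summable_pow_mul_eval_U_div hr (abs_cos_le_one θ)
  have hT := (hasSum_pow_mul_cos_div hr θ).mul_left 2
  rw [mul_div_cancel₀ _ two_ne_zero] at hT
  have hf : HasSum f (B + log Q) := by
    rw [← sub_neg_eq_add]
    refine (hB.sub hT).congr_fun fun n => ?_
    have hTU := congrArg (Polynomial.eval (cos θ)) (two_mul_T_eq_U_sub_U ℝ (n - 1))
    simp only [Polynomial.eval_mul, Polynomial.eval_ofNat, Polynomial.eval_sub, T_real_cos,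
      show (n : ℤ) - 1 + 2 = n + 1 by ring] at hTU
    push_cast at hTU
    linear_combination r ^ (n + 1) / (n + 1) * hTU
  have hf₂ : HasSum (fun n => f (n + 2)) (B + log Q - r ^ 2 / 2) := by
    have h := (hasSum_nat_add_iff' 2).mpr hf
    have hf01 : ∑ i ∈ range 2, f i = r ^ 2 / 2 := by simp [f, sum_range_succ]; ring
    rwa [hf01] at h
  rw [show log Q - r ^ 2 / 2 = B + log Q - r ^ 2 / 2 - B by ring]
  refine (hf₂.sub hB).congr_fun fun k => ?_
  simp only [f]
  push_cast
  rw [show (k : ℤ) + 2 - 1 = k + 1 by ring]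
  field_simp
  ring

theorem stmt12_general (x y : EuclideanSpace ℝ (Fin 2)) (hxy : ‖x‖ < ‖y‖) :
    4 * Real.log (‖x - y‖⁻¹) = 4 * Real.log (‖y‖⁻¹) - ‖x‖ ^ 2 / ‖y‖ ^ 2 -
      2 * ∑' k : ℕ, (‖x‖ / ‖y‖) ^ (k + 1) *
        ((‖x‖ ^ 2 / ‖y‖ ^ 2) / ((k : ℝ) + 3) - 1 / ((k : ℝ) + 1)) *
        gegenbauer 1 (k + 1) ((inner ℝ x y : ℝ) / (‖x‖ * ‖y‖)) := by
  have hy : 0 < ‖y‖ := (norm_nonneg x).trans_lt hxy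
  set r := ‖x‖ / ‖y‖ with hr_def
  have hr : |r| < 1 := by rwa [abs_div, abs_norm, abs_norm, div_lt_one hy]
  have hQ : ‖x - y‖ ^ 2 = ‖y‖ ^ 2 * (1 - 2 * r * cos (angle x y) + r ^ 2) := by
    rw [sq, norm_sub_sq_eq_norm_sq_add_norm_sq_sub_two_mul_norm_mul_norm_mul_cos_angle, hr_def]
    field_simp [hy.ne']
    ring
  have hxy' : ‖x - y‖ ≠ 0 := by
    rw [norm_ne_zero_iff, sub_ne_zero]
    rintro rfl
    exact hxy.false
  have hlog := congrArg Real.log hQ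
  rw [Real.log_pow, Real.log_mul (pow_ne_zero 2 hy.ne')
    (right_ne_zero_of_mul (hQ ▸ pow_ne_zero 2 hxy')), Real.log_pow] at hlog
  rw [← cos_angle, ← div_pow]
  simp_rw [gegenbauer_one_eq_eval_U, Nat.cast_add, Nat.cast_one]
  rw [(hasSum_pow_mul_eval_U_cos hr (angle x y)).tsum_eq, Real.log_inv, Real.log_inv]
  push_cast at hlog
  linarith

theorem stmt12 (x y : EuclideanSpace ℝ (Fin 2)) (hx : 0 < ‖x‖) (hxy : ‖x‖ < ‖y‖) :
    4 * Real.log (‖x - y‖⁻¹) = 4 * Real.log (‖y‖⁻¹) - ‖x‖ ^ 2 / ‖y‖ ^ 2 -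
      2 * ∑' k : ℕ, (‖x‖ / ‖y‖) ^ (k + 1) *
        ((‖x‖ ^ 2 / ‖y‖ ^ 2) / ((k : ℝ) + 3) - 1 / ((k : ℝ) + 1)) *
        gegenbauer 1 (k + 1) ((inner ℝ x y : ℝ) / (‖x‖ * ‖y‖)) :=
  stmt12_general x y hxy
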